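/- Let r, s ∈ 𝕆 and I ∈ 𝕊 be such that r·s̄ ∈ ℂ_I. Then for every J ∈ 𝕊, min(|r + I·s|, |r − I·s|) ≤ |r + J·s| ≤ max(|r + I·s|, |r − I·s|). -/

import Mathlib

/-! Octonions via the Cayley–Dickson construction on the quaternions,
the n-dimensional quadratic cone, the slice topology, and slice regularity. -/

noncomputable section
open Quaternion Topology

/-- The octonions, as `ℍ × ℍ` with the (L²) Euclidean norm and
Cayley–Dickson multiplication. -/
abbrev Oct : Type := WithLp 2 (ℍ × ℍ)

namespace Oct

def c1 (p : Oct) : ℍ := (WithLp.equiv 2 (ℍ × ℍ) p).1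
def c2 (p : Oct) : ℍ := (WithLp.equiv 2 (ℍ × ℍ) p).2
def mk (a b : ℍ) : Oct := (WithLp.equiv 2 (ℍ × ℍ)).symm (a, b)

instance : One Oct := ⟨mk 1 0⟩

/-- Cayley–Dickson multiplication. -/
instance : Mul Oct :=
  ⟨fun p q => mk (c1 p * c1 q - star (c2 q) * c2 p) (c2 q * c1 p + c2 p * star (c1 q))⟩

/-- Octonionic conjugation. -/
instance : Star Oct := ⟨fun p => mk (star (c1 p)) (-(c2 p))⟩

/-- Inverse: `p⁻¹ = ‖p‖⁻² • (star p)` (so `0⁻¹ = 0`). -/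
instance : Inv Oct := ⟨fun p => (‖p‖ ^ 2)⁻¹ • star p⟩

/-- The real inner product on `𝕆 ≅ ℝ⁸`, via polarization. -/
def oinner (p q : Oct) : ℝ := (1 / 4) * (‖p + q‖ ^ 2 - ‖p - q‖ ^ 2)

/-- The sphere `𝕊` of imaginary units of the octonions. -/
def Sph : Set Oct := {I | I * I = -1}

/-- The slice complex plane `ℂ_I = ℝ + ℝ I ⊆ 𝕆`. -/
def CI (I : Oct) : Set Oct := {z | ∃ s t : ℝ, z = s • (1 : Oct) + t • I}

end Oct

open Oct

/-- The point `x + y I ∈ ℂ_Iⁿ ⊆ 𝕆ⁿ`. -/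
def aff {n : ℕ} (x y : Fin n → ℝ) (I : Oct) : Fin n → Oct :=
  fun m => x m • (1 : Oct) + y m • I

/-- The embedding `ℝⁿ ⊆ 𝕆ⁿ`. -/
def ofRealn {n : ℕ} (x : Fin n → ℝ) : Fin n → Oct := fun m => x m • (1 : Oct)

/-- The slice `ℂ_Iⁿ ⊆ 𝕆ⁿ`. -/
def slicen (n : ℕ) (I : Oct) : Set (Fin n → Oct) := {q | ∃ x y : Fin n → ℝ, q = aff x y I}

/-- The `n`-dimensional quadratic cone `𝕆ₛⁿ = ⋃_{I ∈ 𝕊} ℂ_Iⁿ`. -/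
def cone (n : ℕ) : Set (Fin n → Oct) := ⋃ I ∈ Sph, slicen n I

/-- The slice topology `τ_s`: a set is open iff its trace on every slice `ℂ_Iⁿ`
is open (expressed via the canonical parametrizations `(x,y) ↦ x + yI`). -/
def τs (n : ℕ) : TopologicalSpace (Fin n → Oct) :=
  ⨆ I : Sph, TopologicalSpace.coinduced
    (fun p : (Fin n → ℝ) × (Fin n → ℝ) => aff p.1 p.2 I.1) inferInstance

/-- A slice-open subset of the quadratic cone. -/
def SliceOpen (n : ℕ) (Ω : Set (Fin n → Oct)) : Prop :=
  Ω ⊆ cone n ∧ IsOpen[τs n] Ω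

/-- A slice-domain: a nonempty slice-connected slice-open subset of the cone. -/
def SliceDomain (n : ℕ) (Ω : Set (Fin n → Oct)) : Prop :=
  SliceOpen n Ω ∧ @IsConnected _ (τs n) Ω

/-- Real-connectedness: `Ω ∩ ℝⁿ` is a (pre)connected subset of `ℝⁿ`. -/
def RealConnected (n : ℕ) (Ω : Set (Fin n → Oct)) : Prop :=
  IsPreconnected {x : Fin n → ℝ | ofRealn x ∈ Ω}

/-- Axially symmetric subsets of the cone. -/
def AxSymm (n : ℕ) (Ω : Set (Fin n → Oct)) : Prop :=
  ∀ (x y : Fin n → ℝ), ∀ I ∈ Sph, ∀ J ∈ Sph, aff x y I ∈ Ω → aff x y J ∈ Ω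

/-- The upper half-space `ℝ²ⁿ₊`: pairs `(x,y)` with `y = 0` or the first
nonzero coordinate of `y` positive. -/
def pos2n (n : ℕ) : Set ((Fin n → ℝ) × (Fin n → ℝ)) :=
  {p | p.2 = 0 ∨ ∃ m : Fin n, 0 < p.2 m ∧ ∀ k : Fin n, k < m → p.2 k = 0}

/-- `Ω_{s₁}`. -/
def s1 {n : ℕ} (Ω : Set (Fin n → Oct)) : Set ((Fin n → ℝ) × (Fin n → ℝ)) :=
  {p | ∃ I ∈ Sph, aff p.1 p.2 I ∈ Ω}

/-- `Ω_{s₂}`. -/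
def s2 {n : ℕ} (Ω : Set (Fin n → Oct)) : Set ((Fin n → ℝ) × (Fin n → ℝ)) :=
  {p | ∃ J ∈ Sph, ∃ K ∈ Sph, J ≠ K ∧ aff p.1 p.2 J ∈ Ω ∧ aff p.1 p.2 K ∈ Ω}

/-- Slice functions: induced on `Ω_{s₂}⁺` by a pair `(F₁, F₂)` via
`f(x + yI) = F₁(x,y) + I·F₂(x,y)`. -/
def IsSliceFun (n : ℕ) (Ω : Set (Fin n → Oct)) (f : (Fin n → Oct) → Oct) : Prop :=
  ∃ F₁ F₂ : (Fin n → ℝ) × (Fin n → ℝ) → Oct,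
    ∀ x y : Fin n → ℝ, (x, y) ∈ s2 Ω ∩ pos2n n → ∀ I ∈ Sph, aff x y I ∈ Ω →
      f (aff x y I) = F₁ (x, y) + I * F₂ (x, y)

/-- Holomorphy of a function of `n` slice variables, read through the
parametrization `(x,y) ↦ x + yI`: continuous partial derivatives (i.e. `C¹`)
and the Cauchy–Riemann equations `(∂/∂xₘ + I ∂/∂yₘ) g = 0` on `U`. -/
def Holo (n : ℕ) (I : Oct) (g : (Fin n → ℝ) × (Fin n → ℝ) → Oct)
    (U : Set ((Fin n → ℝ) × (Fin n → ℝ))) : Prop :=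
  ContDiffOn ℝ 1 g U ∧
  ∀ p ∈ U, ∀ m : Fin n,
    fderiv ℝ g p (Pi.single m 1, 0) + I * fderiv ℝ g p (0, Pi.single m 1) = 0

/-- Weak slice regularity: each restriction `f|_{Ω ∩ ℂ_Iⁿ}` is holomorphic. -/
def WSliceReg (n : ℕ) (Ω : Set (Fin n → Oct)) (f : (Fin n → Oct) → Oct) : Prop :=
  ∀ I ∈ Sph, Holo n I (fun p => f (aff p.1 p.2 I)) {p | aff p.1 p.2 I ∈ Ω}

/-- The complex structure `σ(a,b) = (−b,a)` on `𝕆²`. -/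
def sigma2 : Oct × Oct → Oct × Oct := fun w => (-w.2, w.1)

/-- Holomorphic stem maps: `F : V → 𝕆²` extends to a `C¹` map `G` on an open
neighborhood `U ⊇ V` satisfying `(∂/∂xₘ + σ ∂/∂yₘ) G = 0` on `U`. -/
def StemHolo (n : ℕ) (V : Set ((Fin n → ℝ) × (Fin n → ℝ)))
    (F : (Fin n → ℝ) × (Fin n → ℝ) → Oct × Oct) : Prop :=
  ∃ (U : Set ((Fin n → ℝ) × (Fin n → ℝ))) (G : (Fin n → ℝ) × (Fin n → ℝ) → Oct × Oct),
    IsOpen U ∧ V ⊆ U ∧ Set.EqOn G F V ∧ ContDiffOn ℝ 1 G U ∧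
    ∀ p ∈ U, ∀ m : Fin n,
      fderiv ℝ G p (Pi.single m 1, 0) + sigma2 (fderiv ℝ G p (0, Pi.single m 1)) = 0

/-- Strong slice regularity: `f` is induced by a holomorphic stem map on `Ω_{s₁}`. -/
def SSliceReg (n : ℕ) (Ω : Set (Fin n → Oct)) (f : (Fin n → Oct) → Oct) : Prop :=
  ∃ F : (Fin n → ℝ) × (Fin n → ℝ) → Oct × Oct, StemHolo n (s1 Ω) F ∧
    ∀ x y : Fin n → ℝ, ∀ I ∈ Sph, aff x y I ∈ Ω →
      f (aff x y I) = (F (x, y)).1 + I * (F (x, y)).2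

/-- An s-basis `{I, J, K}` of the octonions. -/
def IsSBasis (I J K : Oct) : Prop :=
  I ∈ Sph ∧ J ∈ Sph ∧ K ∈ Sph ∧
  LinearIndependent ℝ ![(1 : Oct), I, J, I * J, K, J * K, I * K, (I * J) * K] ∧
  Submodule.span ℝ (Set.range ![(1 : Oct), I, J, I * J, K, J * K, I * K, (I * J) * K]) = ⊤

/-- Iterated left multiplication `L_w^β = (L_{w₁})^{β₁} ∘ ⋯ ∘ (L_{wₙ})^{βₙ}`. -/
def Lpow {n : ℕ} (w : Fin n → Oct) (β : Fin n → ℕ) : Oct → Oct :=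
  fun a => (List.finRange n).foldr (fun ℓ c => (fun o => w ℓ * o)^[β ℓ] c) a

/-- The `*`-power `(q − p)^{*α} a = ∑_{β ≤ α} C(α,β) L_q^β (L_{−p}^{α−β} a)`. -/
def starPow {n : ℕ} (p : Fin n → Oct) (α : Fin n → ℕ) (a : Oct) (q : Fin n → Oct) : Oct :=
  ∑ β ∈ Finset.Iic α, (∏ ℓ, (α ℓ).choose (β ℓ)) • Lpow q β (Lpow (-p) (α - β) a)

/-- The `ℓ`-th slice derivative `∂_ℓ f (x + w) = (∂/∂x_ℓ) f (x + w)`. -/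
def sderiv {n : ℕ} (ℓ : Fin n) (f : (Fin n → Oct) → Oct) : (Fin n → Oct) → Oct :=
  fun q => deriv (fun t : ℝ => f (fun m => q m + (if m = ℓ then t else 0) • (1 : Oct))) 0

/-- The iterated slice derivative `f^{(α)} = (∂₁)^{α₁} ⋯ (∂ₙ)^{αₙ} f`. -/
def sderivMulti {n : ℕ} (α : Fin n → ℕ) (f : (Fin n → Oct) → Oct) : (Fin n → Oct) → Oct :=
  (List.finRange n).foldr (fun ℓ g => (sderiv ℓ)^[α ℓ] g) f

/-- The slice-polydisc `P̃(q₀, r)` (relative to `I ∈ 𝕊` with `q₀ ∈ ℂ_Iⁿ`):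
points `x + yJ` with `x ± yI` in the closed polydisc `P_I(q₀, r)`. -/
def polyDisc {n : ℕ} (q₀ : Fin n → Oct) (I : Oct) (r : Fin n → ℝ) : Set (Fin n → Oct) :=
  {q | ∃ x y : Fin n → ℝ, ∃ J ∈ Sph, q = aff x y J ∧
        (∀ ℓ, ‖aff x y I ℓ - q₀ ℓ‖ ≤ r ℓ) ∧ (∀ ℓ, ‖aff x (-y) I ℓ - q₀ ℓ‖ ≤ r ℓ)}

/-! The octonions form a composition algebra: `‖p q‖ = ‖p‖ ‖q‖` and `⟪r, J s⟫ = ⟪r s̄, J⟫`, so for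
a unit `J` one has `‖r ± J s‖² = ‖r‖² + ‖s‖² ± 2 ⟪r s̄, J⟫`. Imaginary units are orthogonal to `1`,
so if `r s̄ = u + v I` then `⟪r s̄, J⟫ = v ⟪I, J⟫` with `⟪I, J⟫ ∈ [-1, 1]`; thus `‖r + J s‖²` lies
between `‖r ± I s‖² = ‖r‖² + ‖s‖² ± 2 v`. -/

open scoped RealInnerProductSpace

namespace Oct

lemma c1_mul (p q : Oct) : c1 (p * q) = c1 p * c1 q - star (c2 q) * c2 p := rfl
lemma c2_mul (p q : Oct) : c2 (p * q) = c2 q * c1 p + c2 p * star (c1 q) := rfl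
lemma c1_add (p q : Oct) : c1 (p + q) = c1 p + c1 q := rfl
lemma c2_add (p q : Oct) : c2 (p + q) = c2 p + c2 q := rfl
lemma c1_star (p : Oct) : c1 (star p) = star (c1 p) := rfl
lemma c2_star (p : Oct) : c2 (star p) = -c2 p := rfl
lemma c1_one : c1 (1 : Oct) = 1 := rfl
lemma c2_one : c2 (1 : Oct) = 0 := rfl

lemma ext {p q : Oct} (h1 : c1 p = c1 q) (h2 : c2 p = c2 q) : p = q :=
  WithLp.ofLp_injective 2 (Prod.ext h1 h2)

lemma inner_eq (p q : Oct) : ⟪p, q⟫ = ⟪c1 p, c1 q⟫ + ⟪c2 p, c2 q⟫ := rfl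

lemma norm_sq_eq (p : Oct) : ‖p‖ ^ 2 = ‖c1 p‖ ^ 2 + ‖c2 p‖ ^ 2 :=
  WithLp.prod_norm_sq_eq_of_L2 p

protected lemma mul_add (p q r : Oct) : p * (q + r) = p * q + p * r := by
  apply ext <;> simp only [c1_mul, c2_mul, c1_add, c2_add, star_add, mul_add, add_mul] <;> abel

protected lemma mul_one (p : Oct) : p * 1 = p := by
  apply ext <;> simp [c1_mul, c2_mul, c1_one, c2_one]

protected lemma norm_one : ‖(1 : Oct)‖ = 1 := by
  rw [← pow_eq_one_iff_of_nonneg (norm_nonneg _) two_ne_zero, norm_sq_eq, c1_one, c2_one]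
  simp

end Oct

namespace Quaternion

lemma re_mul_comm (a b : ℍ) : (a * b).re = (b * a).re := by
  simp only [re_mul]; ring

lemma inner_mul_right_eq_inner_mul_star (a b c : ℍ) : ⟪a, b * c⟫ = ⟪a * star c, b⟫ := by
  rw [inner_def, inner_def, star_mul, mul_assoc]

lemma inner_mul_right_eq_inner_star_mul (a b c : ℍ) : ⟪a, b * c⟫ = ⟪star b * a, c⟫ := by
  rw [inner_def, inner_def, star_mul, ← mul_assoc, re_mul_comm, mul_assoc]

lemma inner_mul_star_mul_eq_inner_mul_mul_star (a b c d : ℍ) :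
    ⟪a * c, star d * b⟫ = ⟪d * a, b * star c⟫ := by
  simp only [inner_def, star_mul, star_star, ← mul_assoc]
  rw [re_mul_comm]
  simp only [mul_assoc]

end Quaternion

namespace Oct

lemma inner_mul_right_eq_inner_mul_star (r s J : Oct) : ⟪r, J * s⟫ = ⟪r * star s, J⟫ := by
  rw [inner_eq, inner_eq, c1_mul, c2_mul, c1_mul, c2_mul, c1_star, c2_star]
  simp only [star_neg, star_star, neg_mul, sub_neg_eq_add]
  rw [inner_sub_right, inner_add_right, inner_add_left, inner_add_left, inner_neg_left,
    Quaternion.inner_mul_right_eq_inner_mul_star (c1 r) (c1 J) (c1 s),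
    Quaternion.inner_mul_right_eq_inner_star_mul (c1 r) (star (c2 s)) (c2 J), star_star,
    Quaternion.inner_mul_right_eq_inner_star_mul (c2 r) (c2 s) (c1 J),
    Quaternion.inner_mul_right_eq_inner_mul_star (c2 r) (c2 J) (star (c1 s)), star_star]
  ring

protected lemma norm_mul (p q : Oct) : ‖p * q‖ = ‖p‖ * ‖q‖ := by
  rw [← pow_left_inj₀ (norm_nonneg _) (by positivity) two_ne_zero, mul_pow, norm_sq_eq,
    norm_sq_eq p, norm_sq_eq q, c1_mul, c2_mul, norm_sub_sq_real, norm_add_sq_real,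
    Quaternion.inner_mul_star_mul_eq_inner_mul_mul_star (c1 p) (c2 p) (c1 q) (c2 q)]
  simp only [norm_mul, Quaternion.norm_star, mul_pow]
  ring

lemma norm_eq_one_of_mem_Sph {K : Oct} (hK : K ∈ Sph) : ‖K‖ = 1 := by
  have hK2 : ‖K‖ ^ 2 = 1 := by
    rw [sq, ← Oct.norm_mul, show K * K = -1 from hK, norm_neg, Oct.norm_one]
  exact (pow_eq_one_iff_of_nonneg (norm_nonneg K) two_ne_zero).mp hK2

/-- Multiplying `K + 1` by the unit `K` gives `K - 1`, so `K ± 1` have equal norms. -/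
lemma inner_one_eq_zero_of_mem_Sph {K : Oct} (hK : K ∈ Sph) : ⟪(1 : Oct), K⟫ = 0 := by
  have hmul : K * (K + 1) = K - 1 := by
    rw [Oct.mul_add, show K * K = -1 from hK, Oct.mul_one, neg_add_eq_sub]
  have hnorm : ‖K - 1‖ = ‖K + 1‖ := by
    rw [← hmul, Oct.norm_mul, norm_eq_one_of_mem_Sph hK, one_mul]
  have hsq := congrArg (· ^ 2) hnorm
  simp only [norm_sub_sq_real, norm_add_sq_real] at hsq
  rw [real_inner_comm]
  linarith

lemma norm_add_mul_sq {J : Oct} (hJ : ‖J‖ = 1) (r s : Oct) :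
    ‖r + J * s‖ ^ 2 = ‖r‖ ^ 2 + ‖s‖ ^ 2 + 2 * ⟪r * star s, J⟫ := by
  rw [norm_add_sq_real, inner_mul_right_eq_inner_mul_star, Oct.norm_mul, hJ, one_mul]
  ring

lemma norm_sub_mul_sq {J : Oct} (hJ : ‖J‖ = 1) (r s : Oct) :
    ‖r - J * s‖ ^ 2 = ‖r‖ ^ 2 + ‖s‖ ^ 2 - 2 * ⟪r * star s, J⟫ := by
  rw [norm_sub_sq_real, inner_mul_right_eq_inner_mul_star, Oct.norm_mul, hJ, one_mul]
  ring

lemma inner_smul_one_add_smul_of_mem_Sph (u v : ℝ) (I : Oct) {K : Oct} (hK : K ∈ Sph) :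
    ⟪u • (1 : Oct) + v • I, K⟫ = v * ⟪I, K⟫ := by
  rw [inner_add_left, real_inner_smul_left, real_inner_smul_left,
    inner_one_eq_zero_of_mem_Sph hK, mul_zero, zero_add]

end Oct

lemma mem_uIcc_of_sq_mem_uIcc {a b c : ℝ} (ha : 0 ≤ a) (hb : 0 ≤ b) (hc : 0 ≤ c)
    (h : c ^ 2 ∈ Set.uIcc (a ^ 2) (b ^ 2)) : c ∈ Set.uIcc a b := by
  have := Real.sqrt_monotone.mapsTo_uIcc h
  rwa [Real.sqrt_sq ha, Real.sqrt_sq hb, Real.sqrt_sq hc] at this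

lemma add_mul_mem_uIcc {a b t : ℝ} (ht : t ∈ Set.Icc (-1) 1) :
    a + b * t ∈ Set.uIcc (a + b) (a - b) := by
  obtain ⟨ht₁, ht₂⟩ := ht
  rcases le_total 0 b with hb | hb
  · exact Set.mem_uIcc.mpr (Or.inr ⟨by nlinarith, by nlinarith⟩)
  · exact Set.mem_uIcc.mpr (Or.inl ⟨by nlinarith, by nlinarith⟩)

/-- If `r s̄ ∈ ℂ_I` for some `I ∈ 𝕊`, then for every `J ∈ 𝕊`,
`min(|r + I s|, |r − I s|) ≤ |r + J s| ≤ max(|r + I s|, |r − I s|)`. -/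
theorem norm_add_smul_unit_bounds (r s I : Oct) (hI : I ∈ Sph)
    (h : r * star s ∈ CI I) :
    ∀ J ∈ Sph,
      min ‖r + I * s‖ ‖r - I * s‖ ≤ ‖r + J * s‖ ∧
      ‖r + J * s‖ ≤ max ‖r + I * s‖ ‖r - I * s‖ := by
  obtain ⟨u, v, hrs⟩ := h
  intro J hJ
  have hI1 := norm_eq_one_of_mem_Sph hI
  have hJ1 := norm_eq_one_of_mem_Sph hJ
  have hIJ : ⟪I, J⟫ ∈ Set.Icc (-1) 1 := by
    have := abs_real_inner_le_norm I J
    rw [hI1, hJ1, one_mul] at this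
    exact abs_le.mp this
  have hsq : ‖r + J * s‖ ^ 2 ∈ Set.uIcc (‖r + I * s‖ ^ 2) (‖r - I * s‖ ^ 2) := by
    rw [norm_add_mul_sq hI1, norm_sub_mul_sq hI1, norm_add_mul_sq hJ1, hrs,
      inner_smul_one_add_smul_of_mem_Sph u v I hI, inner_smul_one_add_smul_of_mem_Sph u v I hJ,
      real_inner_self_eq_norm_sq, hI1]
    convert add_mul_mem_uIcc (a := ‖r‖ ^ 2 + ‖s‖ ^ 2) (b := 2 * v) hIJ using 2 <;> ring
  exact mem_uIcc_of_sq_mem_uIcc (norm_nonneg _) (norm_nonneg _) (norm_nonneg _) hsq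

end
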